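/- arXiv:1511.00989 — 5 statements merged into one kernel-verified Lean document; each statement's English description precedes it below -/
import Mathlib

section
/- For all x ∈ [0,h], x(h-x) = Σ_{k=1}^∞ (4h²(1-(-1)^k)/(πk)³) sin(πkx/h). -/
/-!
Mathlib expands the Bernoulli polynomial `B₃` on `[0, 1]` as `Σ sin (2π n s) / n³` (up to a
constant). Since `sin (2π n (s + 1/2)) = (-1)ⁿ sin (2π n s)`, the difference of the expansions at
`s` and `s + 1/2` keeps exactly the odd frequencies, with coefficient `1 - (-1)ⁿ`, while
`B₃ s - B₃ (s + 1/2) = 3/4 · s (1 - 2s)` is a parabola. Taking `s = x / (2h)` gives the series.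
-/

open Real Set Nat

theorem bernoulliFun_three (x : ℝ) : bernoulliFun 3 x = x ^ 3 - 3 / 2 * x ^ 2 + 1 / 2 * x := by
  simp only [bernoulliFun, Polynomial.bernoulli, Finset.sum_range_succ, Finset.sum_range_zero,
    Polynomial.map_add, Polynomial.map_monomial, Polynomial.eval_add, Polynomial.eval_monomial]
  norm_num [bernoulli]
  ring

theorem hasSum_one_sub_neg_one_pow_div_nat_pow_mul_sin {k : ℕ} (hk : k ≠ 0) {t : ℝ}
    (ht : t ∈ Icc (0 : ℝ) 1) :
    HasSum (fun n : ℕ => (1 - (-1 : ℝ) ^ n) / (n : ℝ) ^ (2 * k + 1) * sin (π * n * t))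
      ((-1 : ℝ) ^ (k + 1) * (2 * π) ^ (2 * k + 1) / 2 / (2 * k + 1)! *
        (bernoulliFun (2 * k + 1) (t / 2) - bernoulliFun (2 * k + 1) (t / 2 + 1 / 2))) := by
  have h_lo : t / 2 ∈ Icc (0 : ℝ) 1 := ⟨by linarith [ht.1], by linarith [ht.2]⟩
  have h_hi : t / 2 + 1 / 2 ∈ Icc (0 : ℝ) 1 := ⟨by linarith [ht.1], by linarith [ht.2]⟩
  rw [mul_sub]
  refine ((hasSum_one_div_nat_pow_mul_sin hk h_lo).sub
    (hasSum_one_div_nat_pow_mul_sin hk h_hi)).congr_fun fun n => ?_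
  have h_shift : 2 * π * n * (t / 2 + 1 / 2) = π * n * t + n * π := by ring
  rw [h_shift, sin_add_nat_mul_pi, show 2 * π * n * (t / 2) = π * n * t by ring]
  ring

theorem hasSum_one_sub_neg_one_pow_div_nat_pow_three_mul_sin {t : ℝ} (ht : t ∈ Icc (0 : ℝ) 1) :
    HasSum (fun n : ℕ => (1 - (-1 : ℝ) ^ n) / (n : ℝ) ^ 3 * sin (π * n * t))
      (π ^ 3 * (t * (1 - t)) / 4) := by
  have h_value : π ^ 3 * (t * (1 - t)) / 4 = (-1 : ℝ) ^ (1 + 1) * (2 * π) ^ (2 * 1 + 1) / 2 /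
      (2 * 1 + 1)! * (bernoulliFun 3 (t / 2) - bernoulliFun 3 (t / 2 + 1 / 2)) := by
    rw [bernoulliFun_three, bernoulliFun_three]
    norm_num [Nat.factorial]
    ring
  rw [h_value]
  exact hasSum_one_sub_neg_one_pow_div_nat_pow_mul_sin one_ne_zero ht

/-- Fourier sine series of `x ↦ x(h-x)` on `[0,h]`:
`x(h-x) = Σ_{k=1}^∞ (4h²(1-(-1)^k)/(πk)³) sin(πkx/h)`. -/
theorem fourier_sine_series_parabola
    (h : ℝ) (hh : 0 < h) :
    ∀ x ∈ Set.Icc (0:ℝ) h,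
      HasSum
        (fun k : ℕ+ =>
          4 * h ^ 2 * (1 - (-1 : ℝ) ^ (k : ℕ)) / (Real.pi * (k : ℝ)) ^ 3 *
            Real.sin (Real.pi * (k : ℝ) * x / h))
        (x * (h - x)) := by
  intro x ⟨hx0, hxh⟩
  have ht : x / h ∈ Icc (0 : ℝ) 1 := ⟨div_nonneg hx0 hh.le, (div_le_one hh).mpr hxh⟩
  have h_value : x * (h - x) = 4 * h ^ 2 / π ^ 3 * (π ^ 3 * (x / h * (1 - x / h)) / 4) := by
    field_simp
  refine (hasSum_pnat_iff (f := fun n : ℕ => 4 * h ^ 2 * (1 - (-1 : ℝ) ^ n) / (π * n) ^ 3 *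
    sin (π * n * x / h))).mpr ?_
  simp only [pow_zero, sub_self, mul_zero, zero_div, zero_mul, add_zero, h_value]
  refine ((hasSum_one_sub_neg_one_pow_div_nat_pow_three_mul_sin ht).mul_left
    (4 * h ^ 2 / π ^ 3)).congr_fun fun n => ?_
  rw [mul_div_assoc (π * n)]
  field_simp
end

section
/- Define K(x,t) = Σ_{k=1}^∞ (2((-1)^k - 1)/(Π₁kπ)) e^{-ν(πk/h)²t} sin(πkx/h) for t > 0, x ∈ [0,h]. Then for every x ∈ [0,h] and t ∈ ℝ, ∫_{-∞}^t K(x, t-τ) dτ = -x(h-x)/(2Π₁ν). -/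
/-!
Substituting `s = t - τ` turns the integral into `∫₀^∞ K(x, s) ds`. The `k`-th mode is
`cₖ exp (-λₖ s) sin (π k x / h)` with `λₖ = ν (π k / h)²` and `cₖ / λₖ = O(1/k³)`, so the series
may be integrated term by term, giving the sine series `Σ cₖ / λₖ · sin (π k x / h)`.
With `y = x / h`, `sin (2π n (y/2 + 1/2)) = (-1)ⁿ sin (π n y)`, so this odd-mode sum is a
difference of two values of the Fourier series `Σ sin (2π n u) / n³ = (2π³/3) B₃(u)` of the
Bernoulli polynomial, and `B₃((y+1)/2) - B₃(y/2) = (3/8) y (y - 1)` gives the parabola.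
-/

open MeasureTheory Real Set

theorem setIntegral_Iio_comp_sub_left {E : Type*} [NormedAddCommGroup E] [NormedSpace ℝ E]
    (f : ℝ → E) (t : ℝ) : ∫ τ in Iio t, f (t - τ) = ∫ s in Ioi 0, f s := by
  have hpre : (fun τ : ℝ => t - τ) ⁻¹' Ioi 0 = Iio t := by ext τ; simp
  rw [← hpre]
  exact (Measure.measurePreserving_sub_left volume t).setIntegral_preimage_emb
    (MeasurableEquiv.subLeft t).measurableEmbedding f (Ioi 0)

theorem integral_exp_neg_mul_Ioi_zero {b : ℝ} (hb : 0 < b) :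
    ∫ s in Ioi 0, exp (-b * s) = b⁻¹ := by
  rw [integral_exp_mul_Ioi (neg_neg_of_pos hb)]
  simp

theorem hasSum_integral_Ioi_mul_exp_neg {ι : Type*} [Countable ι] {a b : ι → ℝ}
    (hb : ∀ i, 0 < b i) {S : ℝ} (hS : HasSum (fun i => a i / b i) S) :
    ∫ s in Ioi 0, ∑' i, a i * exp (-b i * s) = S := by
  have hterm : ∀ c i, ∫ s in Ioi 0, c * exp (-b i * s) = c / b i := fun c i => by
    rw [integral_const_mul, integral_exp_neg_mul_Ioi_zero (hb i), div_eq_mul_inv]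
  have hnorm : ∀ i, ∫ s in Ioi 0, ‖a i * exp (-b i * s)‖ = |a i / b i| := fun i => by
    simp_rw [norm_mul, norm_eq_abs, abs_exp, hterm, abs_div, abs_of_pos (hb i)]
  have hint : ∀ i, IntegrableOn (fun s => a i * exp (-b i * s)) (Ioi 0) := fun i =>
    (exp_neg_integrableOn_Ioi 0 (hb i)).const_mul (a i)
  have H := hasSum_integral_of_summable_integral_norm hint
    (by simpa only [hnorm] using hS.summable.abs)
  simp only [hterm] at H
  exact H.unique hS

theorem hasSum_sin_div_pow_three {u : ℝ} (hu : u ∈ Icc 0 1) :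
    HasSum (fun n : ℕ => sin (2 * π * n * u) / n ^ 3)
      (2 * π ^ 3 / 3 * (u * (u - 1 / 2) * (u - 1))) := by
  have H := hasSum_one_div_nat_pow_mul_sin one_ne_zero hu
  rw [show 2 * 1 + 1 = 3 from rfl, Polynomial.eval_map] at H
  simp_rw [Polynomial.bernoulli, Finset.sum_range_succ, Finset.sum_range_zero,
    Polynomial.eval₂_add, Polynomial.eval₂_zero, Polynomial.eval₂_monomial] at H
  rw [bernoulli_one, bernoulli_eq_bernoulli'_of_ne_one zero_ne_one, bernoulli'_zero,
    bernoulli_eq_bernoulli'_of_ne_one (by decide), bernoulli'_two,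
    bernoulli_eq_bernoulli'_of_ne_one (by decide), bernoulli'_three] at H
  norm_num [Nat.factorial] at H
  have hvalue : (2 * π) ^ 3 / 2 / 6 * (u ^ 3 + -(3 / 2 * u ^ 2) + 1 / 2 * u) =
      2 * π ^ 3 / 3 * (u * (u - 1 / 2) * (u - 1)) := by
    ring
  rw [hvalue] at H
  exact H.congr_fun fun n => by ring

theorem hasSum_neg_one_pow_sub_one_mul_sin_div_pow_three {y : ℝ} (hy : y ∈ Icc 0 1) :
    HasSum (fun n : ℕ => ((-1) ^ n - 1) * sin (π * n * y) / n ^ 3)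
      (-(π ^ 3 / 4 * y * (1 - y))) := by
  have hu : y / 2 ∈ Icc (0 : ℝ) 1 := ⟨by linarith [hy.1], by linarith [hy.2]⟩
  have hv : y / 2 + 1 / 2 ∈ Icc (0 : ℝ) 1 := ⟨by linarith [hy.1], by linarith [hy.2]⟩
  have hvalue : 2 * π ^ 3 / 3 * ((y / 2 + 1 / 2) * (y / 2 + 1 / 2 - 1 / 2) * (y / 2 + 1 / 2 - 1))
      - 2 * π ^ 3 / 3 * (y / 2 * (y / 2 - 1 / 2) * (y / 2 - 1)) = -(π ^ 3 / 4 * y * (1 - y)) := by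
    ring
  have H := (hasSum_sin_div_pow_three hv).sub (hasSum_sin_div_pow_three hu)
  rw [hvalue] at H
  refine H.congr_fun fun n => ?_
  rw [show 2 * π * n * (y / 2 + 1 / 2) = π * n * y + n * π by ring, sin_add_nat_mul_pi,
    show 2 * π * n * (y / 2) = π * n * y by ring]
  ring

theorem hasSum_sine_series_parabola {h x : ℝ} (ν Pi₁ : ℝ) (hh : 0 < h) (hx : x ∈ Icc 0 h) :
    HasSum (fun k : ℕ+ => 2 * ((-1) ^ (k : ℕ) - 1) / (Pi₁ * k * π) * sin (π * k * x / h) /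
      (ν * (π * k / h) ^ 2)) (-(x * (h - x)) / (2 * Pi₁ * ν)) := by
  have hy : x / h ∈ Icc (0 : ℝ) 1 := ⟨div_nonneg hx.1 hh.le, (div_le_one hh).mpr hx.2⟩
  have H : HasSum (fun k : ℕ+ => ((-1) ^ (k : ℕ) - 1) * sin (π * k * x / h) / (k : ℝ) ^ 3)
      (-(π ^ 3 / 4 * (x / h) * (1 - x / h))) := by
    rw [hasSum_pnat_iff (f := fun n : ℕ => ((-1) ^ n - 1) * sin (π * n * x / h) / n ^ 3)]
    simpa only [mul_div_assoc, pow_zero, sub_self, zero_mul, zero_div, add_zero]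
      using hasSum_neg_one_pow_sub_one_mul_sin_div_pow_three hy
  have hvalue : -(x * (h - x)) / (2 * Pi₁ * ν) =
      2 * h ^ 2 / (Pi₁ * ν * π ^ 3) * -(π ^ 3 / 4 * (x / h) * (1 - x / h)) := by
    field_simp
    ring
  rw [hvalue]
  exact (H.mul_left _).congr_fun fun k => by field_simp

theorem kernel_time_integral_general
    (h ν Pi₁ : ℝ) (hh : 0 < h) (hν : 0 < ν)
    (K : ℝ → ℝ → ℝ)
    (hK : ∀ x t : ℝ, K x t =
      ∑' k : ℕ+, 2 * ((-1 : ℝ) ^ (k : ℕ) - 1) / (Pi₁ * (k : ℝ) * Real.pi) *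
        Real.exp (-ν * (Real.pi * (k : ℝ) / h) ^ 2 * t) *
        Real.sin (Real.pi * (k : ℝ) * x / h)) :
    ∀ x ∈ Set.Icc (0:ℝ) h, ∀ t : ℝ,
      (∫ τ in Set.Iio t, K x (t - τ)) = -(x * (h - x)) / (2 * Pi₁ * ν) := by
  intro x hx t
  have hKx : K x = fun s => ∑' k : ℕ+, 2 * ((-1) ^ (k : ℕ) - 1) / (Pi₁ * k * π) *
      sin (π * k * x / h) * exp (-(ν * (π * k / h) ^ 2) * s) := by
    ext s
    rw [hK]
    congr 1 with k
    rw [neg_mul]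
    ring
  rw [setIntegral_Iio_comp_sub_left (K x), hKx]
  exact hasSum_integral_Ioi_mul_exp_neg (fun k => by positivity)
    (hasSum_sine_series_parabola ν Pi₁ hh hx)

/-- For the kernel `K(x,t) = Σ_{k≥1} (2((-1)^k-1)/(Π₁kπ)) e^{-ν(πk/h)²t} sin(πkx/h)`,
one has `∫_{-∞}^t K(x,t-τ)dτ = -x(h-x)/(2Π₁ν)` for every `x ∈ [0,h]` and `t ∈ ℝ`. -/
theorem kernel_time_integral
    (h ν Pi₁ : ℝ) (hh : 0 < h) (hν : 0 < ν) (hPi₁ : 0 < Pi₁)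
    (K : ℝ → ℝ → ℝ)
    (hK : ∀ x t : ℝ, K x t =
      ∑' k : ℕ+, 2 * ((-1 : ℝ) ^ (k : ℕ) - 1) / (Pi₁ * (k : ℝ) * Real.pi) *
        Real.exp (-ν * (Real.pi * (k : ℝ) / h) ^ 2 * t) *
        Real.sin (Real.pi * (k : ℝ) * x / h)) :
    ∀ x ∈ Set.Icc (0:ℝ) h, ∀ t : ℝ,
      (∫ τ in Set.Iio t, K x (t - τ)) = -(x * (h - x)) / (2 * Pi₁ * ν) :=
  kernel_time_integral_general h ν Pi₁ hh hν K hK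
end

section
/- If u₁ : [0,h]×ℝ → ℝ is a bounded eternal solution of ∂ₜu₁ - ν∂²_{x₃}u₁ = -p₁₀/Π₁ with Dirichlet boundary conditions and constant p₁₀ < 0, then u₁(x₃,t) = μ x₃(h - x₃) with μ = -p₁₀/(2Π₁ν) for all t. -/
open MeasureTheory intervalIntegral Real Filter Topology Set Metric

noncomputable def pd1 (w : ℝ → ℝ → ℝ) (x t : ℝ) : ℝ :=
  fderiv ℝ (fun p : ℝ × ℝ => w p.1 p.2) (x, t) (1, 0)

noncomputable def pd2 (w : ℝ → ℝ → ℝ) (x t : ℝ) : ℝ :=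
  fderiv ℝ (fun p : ℝ × ℝ => w p.1 p.2) (x, t) (0, 1)

lemma contDiff_pd1 {w : ℝ → ℝ → ℝ} (hw : ContDiff ℝ (⊤ : ℕ∞) (fun p : ℝ × ℝ => w p.1 p.2)) :
    ContDiff ℝ (⊤ : ℕ∞) (fun p : ℝ × ℝ => pd1 w p.1 p.2) := by
  have h := hw.fderiv_right (m := (⊤ : ℕ∞)) (by simp)
  exact h.clm_apply contDiff_const

lemma contDiff_pd2 {w : ℝ → ℝ → ℝ} (hw : ContDiff ℝ (⊤ : ℕ∞) (fun p : ℝ × ℝ => w p.1 p.2)) :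
    ContDiff ℝ (⊤ : ℕ∞) (fun p : ℝ × ℝ => pd2 w p.1 p.2) := by
  have h := hw.fderiv_right (m := (⊤ : ℕ∞)) (by simp)
  exact h.clm_apply contDiff_const

lemma hasDerivAt_pd1 {w : ℝ → ℝ → ℝ} (hw : ContDiff ℝ (⊤ : ℕ∞) (fun p : ℝ × ℝ => w p.1 p.2))
    (x t : ℝ) : HasDerivAt (fun y => w y t) (pd1 w x t) x := by
  have h1 : HasFDerivAt (fun p : ℝ × ℝ => w p.1 p.2)
      (fderiv ℝ (fun p : ℝ × ℝ => w p.1 p.2) (x, t)) (x, t) :=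
    (hw.differentiable (by simp) (x, t)).hasFDerivAt
  have h2 : HasDerivAt (fun y : ℝ => ((y, t) : ℝ × ℝ)) ((1 : ℝ), (0 : ℝ)) x :=
    (hasDerivAt_id x).prodMk (hasDerivAt_const x t)
  exact h1.comp_hasDerivAt x h2

lemma hasDerivAt_pd2 {w : ℝ → ℝ → ℝ} (hw : ContDiff ℝ (⊤ : ℕ∞) (fun p : ℝ × ℝ => w p.1 p.2))
    (x t : ℝ) : HasDerivAt (fun s => w x s) (pd2 w x t) t := by
  have h1 : HasFDerivAt (fun p : ℝ × ℝ => w p.1 p.2)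
      (fderiv ℝ (fun p : ℝ × ℝ => w p.1 p.2) (x, t)) (x, t) :=
    (hw.differentiable (by simp) (x, t)).hasFDerivAt
  have h2 : HasDerivAt (fun s : ℝ => ((x, s) : ℝ × ℝ)) ((0 : ℝ), (1 : ℝ)) t :=
    (hasDerivAt_const t x).prodMk (hasDerivAt_id t)
  exact h1.comp_hasDerivAt t h2

lemma cs_interval {f : ℝ → ℝ} {a b : ℝ} (hab : a ≤ b) (hf : ContinuousOn f (Icc a b)) :
    (∫ x in a..b, f x) ^ 2 ≤ (b - a) * ∫ x in a..b, (f x) ^ 2 := by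
  have huIcc : uIcc a b = Icc a b := uIcc_of_le hab
  have hfi : IntervalIntegrable f volume a b := by
    apply ContinuousOn.intervalIntegrable; rwa [huIcc]
  have hf2i : IntervalIntegrable (fun x => (f x) ^ 2) volume a b := by
    apply ContinuousOn.intervalIntegrable; rw [huIcc]; exact hf.pow 2
  rcases eq_or_lt_of_le hab with rfl | hlt
  · simp
  · set I := ∫ x in a..b, f x with hI
    set J := ∫ x in a..b, (f x) ^ 2 with hJ
    set c := I / (b - a) with hc
    have hexp : ∫ x in a..b, (f x - c) ^ 2 = J - 2 * c * I + c ^ 2 * (b - a) := by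
      have h1 : (fun x => (f x - c) ^ 2)
          = fun x => ((f x) ^ 2 - (2 * c) * f x) + c ^ 2 := by
        funext x; ring
      rw [h1, intervalIntegral.integral_add (hf2i.sub (hfi.const_mul _))
        intervalIntegrable_const,
        intervalIntegral.integral_sub hf2i (hfi.const_mul _),
        intervalIntegral.integral_const_mul, intervalIntegral.integral_const]
      rw [smul_eq_mul]; ring
    have h0 : 0 ≤ ∫ x in a..b, (f x - c) ^ 2 :=
      intervalIntegral.integral_nonneg hab (fun x _ => sq_nonneg _)
    rw [hexp] at h0
    have hba : 0 < b - a := by linarith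
    have hcc : c * (b - a) = I := div_mul_cancel₀ I hba.ne'
    nlinarith [sq_nonneg (I - c * (b - a))]

theorem heat_zero (h ν : ℝ) (hh : 0 < h) (hν : 0 < ν)
    (w : ℝ → ℝ → ℝ)
    (hsmooth : ContDiff ℝ (⊤ : ℕ∞) (fun p : ℝ × ℝ => w p.1 p.2))
    (hheat : ∀ x ∈ Set.Icc (0:ℝ) h, ∀ t : ℝ, pd2 w x t = ν * pd1 (pd1 w) x t)
    (hbc : ∀ t : ℝ, w 0 t = 0 ∧ w h t = 0)
    (hbdd : ∃ C : ℝ, ∀ t : ℝ, (∫ x in (0:ℝ)..h, (w x t) ^ 2) ≤ C) :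
    ∀ x ∈ Set.Icc (0:ℝ) h, ∀ t : ℝ, w x t = 0 := by
  obtain ⟨C, hC⟩ := hbdd
  have hw1 := contDiff_pd1 hsmooth
  have hw2 := contDiff_pd1 hw1
  have hcont : Continuous (fun p : ℝ × ℝ => w p.1 p.2) := hsmooth.continuous
  have hcont1 : Continuous (fun p : ℝ × ℝ => pd1 w p.1 p.2) := hw1.continuous
  have hcont2 : Continuous (fun p : ℝ × ℝ => pd1 (pd1 w) p.1 p.2) := hw2.continuous
  have hcontt : Continuous (fun p : ℝ × ℝ => pd2 w p.1 p.2) := (contDiff_pd2 hsmooth).continuous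
  -- slices
  have slice : ∀ {g : ℝ → ℝ → ℝ}, Continuous (fun p : ℝ × ℝ => g p.1 p.2) →
      ∀ t : ℝ, Continuous (fun x => g x t) := by
    intro g hg t
    exact hg.comp (continuous_id.prodMk continuous_const)
  set E : ℝ → ℝ := fun t => ∫ x in (0:ℝ)..h, (w x t) ^ 2 with hE
  have hE0 : ∀ t, 0 ≤ E t :=
    fun t => intervalIntegral.integral_nonneg hh.le (fun x _ => sq_nonneg _)
  -- derivative of the energy
  have hEderiv : ∀ t : ℝ,
      HasDerivAt E (∫ x in (0:ℝ)..h, 2 * w x t * pd2 w x t) t := by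
    intro t₀
    -- dominating bound on a compact neighborhood
    obtain ⟨M, hM⟩ : ∃ M : ℝ, ∀ p ∈ (Icc (0:ℝ) h) ×ˢ (Icc (t₀ - 1) (t₀ + 1)),
        ‖2 * w p.1 p.2 * pd2 w p.1 p.2‖ ≤ M := by
      apply IsCompact.exists_bound_of_continuousOn (isCompact_Icc.prod isCompact_Icc)
      exact ((continuous_const.mul hcont).mul hcontt).continuousOn
    have key := intervalIntegral.hasDerivAt_integral_of_dominated_loc_of_deriv_le
      (𝕜 := ℝ) (μ := volume) (a := (0:ℝ)) (b := h) (x₀ := t₀)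
      (F := fun s x => (w x s) ^ 2) (F' := fun s x => 2 * w x s * pd2 w x s)
      (bound := fun _ => M) (s := ball t₀ 1) (ball_mem_nhds t₀ one_pos)
      (Eventually.of_forall fun s => (((slice hcont s).pow 2).aestronglyMeasurable))
      (((slice hcont t₀).pow 2).intervalIntegrable _ _)
      ((continuous_const.mul (slice hcont t₀)).mul (slice hcontt t₀)).aestronglyMeasurable
      ?_ intervalIntegrable_const ?_
    · exact key.2
    · refine Eventually.of_forall fun x hx s hs => ?_
      have hx' : x ∈ Icc (0:ℝ) h := by
        have : Set.uIoc (0:ℝ) h = Ioc 0 h := uIoc_of_le hh.le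
        rw [this] at hx
        exact ⟨hx.1.le, hx.2⟩
      have hs' : s ∈ Icc (t₀ - 1) (t₀ + 1) := by
        rw [mem_ball, Real.dist_eq, abs_lt] at hs
        constructor <;> linarith [hs.1, hs.2]
      exact hM (x, s) ⟨hx', hs'⟩
    · refine Eventually.of_forall fun x _ s _ => ?_
      have hd := (hasDerivAt_pd2 hsmooth x s).fun_pow 2
      simpa using hd
  -- integration by parts + heat equation
  have hIBP : ∀ t : ℝ, (∫ x in (0:ℝ)..h, 2 * w x t * pd2 w x t)
      = -(2 * ν) * ∫ x in (0:ℝ)..h, (pd1 w x t) ^ 2 := by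
    intro t
    have hcongr : (∫ x in (0:ℝ)..h, 2 * w x t * pd2 w x t)
        = (2 * ν) * ∫ x in (0:ℝ)..h, w x t * pd1 (pd1 w) x t := by
      rw [← intervalIntegral.integral_const_mul]
      apply intervalIntegral.integral_congr
      intro x hx
      rw [uIcc_of_le hh.le] at hx
      show 2 * w x t * pd2 w x t = 2 * ν * (w x t * pd1 (pd1 w) x t)
      rw [hheat x hx t]; ring
    have hparts : (∫ x in (0:ℝ)..h, w x t * pd1 (pd1 w) x t)
        = - ∫ x in (0:ℝ)..h, pd1 w x t * pd1 w x t := by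
      have := intervalIntegral.integral_mul_deriv_eq_deriv_mul
        (u := fun x => w x t) (v := fun x => pd1 w x t)
        (u' := fun x => pd1 w x t) (v' := fun x => pd1 (pd1 w) x t)
        (a := 0) (b := h)
        (fun x _ => hasDerivAt_pd1 hsmooth x t)
        (fun x _ => hasDerivAt_pd1 hw1 x t)
        ((slice hcont1 t).intervalIntegrable _ _)
        ((slice hcont2 t).intervalIntegrable _ _)
      rw [this]
      rw [(hbc t).1, (hbc t).2]
      ring
    rw [hcongr, hparts]
    have : (∫ x in (0:ℝ)..h, pd1 w x t * pd1 w x t)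
        = ∫ x in (0:ℝ)..h, (pd1 w x t) ^ 2 := by
      apply intervalIntegral.integral_congr; intro x _; ring
    rw [this]; ring
  -- Poincaré inequality
  have hPoin : ∀ t : ℝ, E t ≤ h ^ 2 * ∫ x in (0:ℝ)..h, (pd1 w x t) ^ 2 := by
    intro t
    have hint : IntervalIntegrable (fun x => (pd1 w x t) ^ 2) volume 0 h :=
      ((slice hcont1 t).pow 2).intervalIntegrable _ _
    set A := ∫ x in (0:ℝ)..h, (pd1 w x t) ^ 2 with hA
    have hptw : ∀ x ∈ Icc (0:ℝ) h, (w x t) ^ 2 ≤ h * A := by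
      intro x hx
      have hftc : (∫ y in (0:ℝ)..x, pd1 w y t) = w x t := by
        rw [intervalIntegral.integral_eq_sub_of_hasDerivAt
          (fun y _ => hasDerivAt_pd1 hsmooth y t)
          ((slice hcont1 t).intervalIntegrable _ _), (hbc t).1, sub_zero]
      have hcs := cs_interval (f := fun y => pd1 w y t) hx.1
        ((slice hcont1 t).continuousOn)
      rw [hftc] at hcs
      have hmono : (∫ y in (0:ℝ)..x, (pd1 w y t) ^ 2) ≤ A :=
        intervalIntegral.integral_mono_interval le_rfl hx.1 hx.2
          (Eventually.of_forall fun y => sq_nonneg _) hint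
      have h1 : (0:ℝ) ≤ ∫ y in (0:ℝ)..x, (pd1 w y t) ^ 2 :=
        intervalIntegral.integral_nonneg hx.1 (fun y _ => sq_nonneg _)
      nlinarith [hx.1, hx.2]
    calc E t ≤ ∫ _x in (0:ℝ)..h, h * A :=
          intervalIntegral.integral_mono_on hh.le
            (((slice hcont t).pow 2).intervalIntegrable _ _)
            intervalIntegrable_const hptw
      _ = h ^ 2 * A := by
          rw [intervalIntegral.integral_const, smul_eq_mul, sub_zero]; ring
  -- Gronwall-style decay: E ≡ 0
  have hEzero : ∀ t : ℝ, E t = 0 := by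
    set c : ℝ := 2 * ν / h ^ 2 with hc
    have hcpos : 0 < c := by positivity
    have hch : c * h ^ 2 = 2 * ν := by
      rw [hc]; field_simp
    have hG : ∀ t : ℝ, HasDerivAt (fun s => E s * exp (c * s))
        ((-(2 * ν) * ∫ x in (0:ℝ)..h, (pd1 w x t) ^ 2) * exp (c * t)
          + E t * (c * exp (c * t))) t := by
      intro t
      have h1 : HasDerivAt E (-(2 * ν) * ∫ x in (0:ℝ)..h, (pd1 w x t) ^ 2) t := by
        have h2 := hEderiv t; rwa [hIBP t] at h2
      have h2 : HasDerivAt (fun s => exp (c * s)) (c * exp (c * t)) t := by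
        have h3 := ((hasDerivAt_id t).const_mul c).exp
        simp only [id_eq, mul_one] at h3
        rw [mul_comm]
        exact h3
      exact h1.mul h2
    have hG' : ∀ t : ℝ, deriv (fun s => E s * exp (c * s)) t ≤ 0 := by
      intro t
      rw [(hG t).deriv]
      set A := ∫ x in (0:ℝ)..h, (pd1 w x t) ^ 2 with hA
      have hexp : (0:ℝ) < exp (c * t) := exp_pos _
      have h3 : c * E t ≤ 2 * ν * A := by
        calc c * E t ≤ c * (h ^ 2 * A) := mul_le_mul_of_nonneg_left (hPoin t) hcpos.le
          _ = c * h ^ 2 * A := by ring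
          _ = 2 * ν * A := by rw [hch]
      have h4 : (c * E t - 2 * ν * A) * exp (c * t) ≤ 0 :=
        mul_nonpos_of_nonpos_of_nonneg (by linarith) hexp.le
      nlinarith [h4]
    have hanti : Antitone (fun s => E s * exp (c * s)) :=
      antitone_of_deriv_nonpos (fun t => (hG t).differentiableAt) hG'
    intro t
    have hle : ∀ s ≤ t, E t ≤ C * exp (c * (s - t)) := by
      intro s hs
      have h1 : E t * exp (c * t) ≤ E s * exp (c * s) := hanti hs
      have h2 : E s * exp (c * s) ≤ C * exp (c * s) :=
        mul_le_mul_of_nonneg_right (hC s) (exp_pos _).le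
      have h3 : E t ≤ C * exp (c * s) / exp (c * t) :=
        (le_div_iff₀ (exp_pos _)).2 (le_trans h1 h2)
      calc E t ≤ C * exp (c * s) / exp (c * t) := h3
        _ = C * exp (c * (s - t)) := by
            rw [mul_div_assoc, ← Real.exp_sub]; ring_nf
    have htend : Tendsto (fun s => C * exp (c * (s - t))) atBot (𝓝 0) := by
      have h1 : Tendsto (fun s : ℝ => c * s) atBot atBot :=
        tendsto_id.const_mul_atBot hcpos
      have h1' : Tendsto (fun s : ℝ => c * s + -(c * t)) atBot atBot :=
        tendsto_atBot_add_const_right atBot (-(c * t)) h1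
      have h1'' : Tendsto (fun s : ℝ => c * (s - t)) atBot atBot := by
        have : (fun s : ℝ => c * (s - t)) = fun s : ℝ => c * s + -(c * t) := by
          funext s; ring
        rwa [this]
      have h2 := Real.tendsto_exp_atBot.comp h1''
      have h3 := h2.const_mul C
      simpa using h3
    have hneg : E t ≤ 0 :=
      ge_of_tendsto htend (eventually_atBot.2 ⟨t, fun s hs => hle s hs⟩)
    exact le_antisymm hneg (hE0 t)
  -- conclude pointwise vanishing
  intro x hx t
  have hwc : Continuous (fun y => w y t) := slice hcont t
  have hFzero : ∀ y ∈ Icc (0:ℝ) h, (∫ z in (0:ℝ)..y, (w z t) ^ 2) = 0 := by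
    intro y hy
    have h1 : (0:ℝ) ≤ ∫ z in (0:ℝ)..y, (w z t) ^ 2 :=
      intervalIntegral.integral_nonneg hy.1 fun _ _ => sq_nonneg _
    have h2 : (∫ z in (0:ℝ)..y, (w z t) ^ 2) ≤ ∫ z in (0:ℝ)..h, (w z t) ^ 2 :=
      intervalIntegral.integral_mono_interval le_rfl hy.1 hy.2
        (Eventually.of_forall fun _ => sq_nonneg _)
        ((hwc.pow 2).intervalIntegrable _ _)
    have h3 : (∫ z in (0:ℝ)..h, (w z t) ^ 2) = 0 := hEzero t
    linarith
  rcases eq_or_lt_of_le hx.1 with h0 | h0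
  · rw [← h0]; exact (hbc t).1
  rcases eq_or_lt_of_le hx.2 with hH | hH
  · rw [hH]; exact (hbc t).2
  have hd1 : HasDerivAt (fun y => ∫ z in (0:ℝ)..y, (w z t) ^ 2) ((w x t) ^ 2) x :=
    intervalIntegral.integral_hasDerivAt_right ((hwc.pow 2).intervalIntegrable _ _)
      ((hwc.pow 2).stronglyMeasurableAtFilter _ _) ((hwc.pow 2).continuousAt)
  have hd2 : HasDerivAt (fun y => ∫ z in (0:ℝ)..y, (w z t) ^ 2) 0 x := by
    have hnb : Ioo (0:ℝ) h ∈ 𝓝 x := isOpen_Ioo.mem_nhds ⟨h0, hH⟩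
    have heq : (fun y => ∫ z in (0:ℝ)..y, (w z t) ^ 2) =ᶠ[𝓝 x] fun _ => (0:ℝ) :=
      Filter.eventuallyEq_of_mem hnb (fun y hy => hFzero y ⟨hy.1.le, hy.2.le⟩)
    exact (hasDerivAt_const x (0:ℝ)).congr_of_eventuallyEq heq
  have hsq : (w x t) ^ 2 = 0 := hd1.unique hd2
  exact sq_eq_zero_iff.1 hsq

/-- Recovery of the Poiseuille profile: a bounded eternal solution of
`∂ₜu₁ - ν∂²_{x₃}u₁ = -p₁₀/Π₁` with Dirichlet boundary conditions and constant
`p₁₀ < 0` equals `μ x₃(h-x₃)` with `μ = -p₁₀/(2Π₁ν)`. -/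
theorem poiseuille_recovery
    (h ν Pi₁ p₁₀ : ℝ) (hh : 0 < h) (hν : 0 < ν) (hPi₁ : 0 < Pi₁) (hp : p₁₀ < 0)
    (u₁ : ℝ → ℝ → ℝ)
    (hsmooth : ContDiff ℝ (⊤ : ℕ∞) (fun p : ℝ × ℝ => u₁ p.1 p.2))
    (hheat : ∀ x ∈ Set.Icc (0:ℝ) h, ∀ t : ℝ,
      deriv (fun s => u₁ x s) t - ν * iteratedDeriv 2 (fun y => u₁ y t) x = -p₁₀ / Pi₁)
    (hbc : ∀ t : ℝ, u₁ 0 t = 0 ∧ u₁ h t = 0)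
    (hbdd : ∃ C : ℝ, ∀ t : ℝ, (∫ x in (0:ℝ)..h, (u₁ x t) ^ 2) ≤ C) :
    ∀ x ∈ Set.Icc (0:ℝ) h, ∀ t : ℝ,
      u₁ x t = (-p₁₀ / (2 * Pi₁ * ν)) * x * (h - x) := by
  set μ : ℝ := -p₁₀ / (2 * Pi₁ * ν) with hμ
  set w : ℝ → ℝ → ℝ := fun x t => u₁ x t - μ * x * (h - x) with hw
  have hsmP : ContDiff ℝ (⊤ : ℕ∞) (fun p : ℝ × ℝ => μ * p.1 * (h - p.1)) :=
    (contDiff_const.mul contDiff_fst).mul (contDiff_const.sub contDiff_fst)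
  have hsmw : ContDiff ℝ (⊤ : ℕ∞) (fun p : ℝ × ℝ => w p.1 p.2) := hsmooth.sub hsmP
  -- derivative of the parabolic profile
  have hP' : ∀ x : ℝ, HasDerivAt (fun y => μ * y * (h - y)) (μ * h - 2 * μ * x) x := by
    intro x
    have h1 : HasDerivAt (fun y : ℝ => μ * y) μ x := by
      simpa using (hasDerivAt_id x).const_mul μ
    have h2 : HasDerivAt (fun y : ℝ => h - y) (-1) x := by
      exact ((hasDerivAt_const x h).sub (hasDerivAt_id x)).congr_deriv (by norm_num)
    have h3 := h1.mul h2
    have : μ * (h - x) + μ * x * -1 = μ * h - 2 * μ * x := by ring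
    rwa [this] at h3
  -- pd1 w in terms of pd1 u₁
  have hpd1w : ∀ x t : ℝ, pd1 w x t = pd1 u₁ x t - (μ * h - 2 * μ * x) := by
    intro x t
    have h1 : HasDerivAt (fun y => w y t) (pd1 u₁ x t - (μ * h - 2 * μ * x)) x :=
      (hasDerivAt_pd1 hsmooth x t).sub (hP' x)
    exact (hasDerivAt_pd1 hsmw x t).unique h1
  -- pd1 (pd1 w) in terms of pd1 (pd1 u₁)
  have hpd2w : ∀ x t : ℝ, pd1 (pd1 w) x t = pd1 (pd1 u₁) x t + 2 * μ := by
    intro x t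
    have hlin : HasDerivAt (fun y : ℝ => μ * h - 2 * μ * y) (-(2 * μ)) x := by
      exact ((hasDerivAt_const x (μ * h)).sub ((hasDerivAt_id x).const_mul (2 * μ))).congr_deriv (by ring)
    have h1 : HasDerivAt (fun y => pd1 w y t) (pd1 (pd1 u₁) x t + 2 * μ) x := by
      have h2 : (fun y => pd1 w y t) = fun y => pd1 u₁ y t - (μ * h - 2 * μ * y) := by
        funext y; exact hpd1w y t
      rw [h2]
      have h3 := (hasDerivAt_pd1 (contDiff_pd1 hsmooth) x t).sub hlin
      have h4 : pd1 (pd1 u₁) x t - -(2 * μ) = pd1 (pd1 u₁) x t + 2 * μ := by ring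
      rwa [h4] at h3
    exact (hasDerivAt_pd1 (contDiff_pd1 hsmw) x t).unique h1
  -- pd2 w equals pd2 u₁
  have hpdt : ∀ x t : ℝ, pd2 w x t = pd2 u₁ x t := by
    intro x t
    have h1 : HasDerivAt (fun s => w x s) (pd2 u₁ x t) t :=
      (hasDerivAt_pd2 hsmooth x t).sub_const _
    exact (hasDerivAt_pd2 hsmw x t).unique h1
  -- the heat equation in pd form
  have hheat' : ∀ x ∈ Set.Icc (0:ℝ) h, ∀ t : ℝ,
      pd2 u₁ x t = ν * pd1 (pd1 u₁) x t + -p₁₀ / Pi₁ := by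
    intro x hx t
    have h1 := hheat x hx t
    have h2 : deriv (fun s => u₁ x s) t = pd2 u₁ x t := (hasDerivAt_pd2 hsmooth x t).deriv
    have h3 : iteratedDeriv 2 (fun y => u₁ y t) x = pd1 (pd1 u₁) x t := by
      rw [show (2 : ℕ) = 1 + 1 from rfl, iteratedDeriv_succ, iteratedDeriv_one]
      have h4 : deriv (fun y => u₁ y t) = fun y => pd1 u₁ y t := by
        funext y; exact (hasDerivAt_pd1 hsmooth y t).deriv
      rw [h4]
      exact (hasDerivAt_pd1 (contDiff_pd1 hsmooth) x t).deriv
    rw [h2, h3] at h1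
    linarith
  have hheatw : ∀ x ∈ Set.Icc (0:ℝ) h, ∀ t : ℝ,
      pd2 w x t = ν * pd1 (pd1 w) x t := by
    intro x hx t
    rw [hpdt x t, hpd2w x t, hheat' x hx t, hμ]
    field_simp
  have hbcw : ∀ t : ℝ, w 0 t = 0 ∧ w h t = 0 := by
    intro t
    constructor
    · simp [hw, (hbc t).1]
    · simp [hw, (hbc t).2]
  have hbddw : ∃ C : ℝ, ∀ t : ℝ, (∫ x in (0:ℝ)..h, (w x t) ^ 2) ≤ C := by
    obtain ⟨C, hC⟩ := hbdd
    have hPc : Continuous (fun x : ℝ => μ * x * (h - x)) := by continuity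
    refine ⟨2 * C + 2 * ∫ x in (0:ℝ)..h, (μ * x * (h - x)) ^ 2, fun t => ?_⟩
    have hu : Continuous (fun x => u₁ x t) :=
      hsmooth.continuous.comp (continuous_id.prodMk continuous_const)
    have hwc : Continuous (fun x => w x t) := hu.sub hPc
    have hptw : ∀ x ∈ Icc (0:ℝ) h,
        (w x t) ^ 2 ≤ 2 * (u₁ x t) ^ 2 + 2 * (μ * x * (h - x)) ^ 2 := by
      intro x _
      have hwe : w x t = u₁ x t - μ * x * (h - x) := rfl
      rw [hwe]
      nlinarith [sq_nonneg (u₁ x t + μ * x * (h - x)), sq_nonneg (u₁ x t - μ * x * (h - x))]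
    have h1 : (∫ x in (0:ℝ)..h, (w x t) ^ 2)
        ≤ ∫ x in (0:ℝ)..h, (2 * (u₁ x t) ^ 2 + 2 * (μ * x * (h - x)) ^ 2) :=
      intervalIntegral.integral_mono_on hh.le
        ((hwc.pow 2).intervalIntegrable _ _)
        (((continuous_const.mul (hu.pow 2)).add (continuous_const.mul (hPc.pow 2))).intervalIntegrable _ _)
        hptw
    have h2 : (∫ x in (0:ℝ)..h, (2 * (u₁ x t) ^ 2 + 2 * (μ * x * (h - x)) ^ 2))
        = 2 * (∫ x in (0:ℝ)..h, (u₁ x t) ^ 2)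
          + 2 * ∫ x in (0:ℝ)..h, (μ * x * (h - x)) ^ 2 := by
      rw [intervalIntegral.integral_add (f := fun x => 2 * (u₁ x t) ^ 2)
        (g := fun x => 2 * (μ * x * (h - x)) ^ 2)
        ((continuous_const.mul (hu.pow 2)).intervalIntegrable _ _)
        ((continuous_const.mul (hPc.pow 2)).intervalIntegrable _ _),
        intervalIntegral.integral_const_mul, intervalIntegral.integral_const_mul]
    have h3 := hC t
    rw [h2] at h1
    linarith
  have hzero := heat_zero h ν hh hν w hsmw hheatw hbcw hbddw
  intro x hx t
  have h1 := hzero x hx t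
  have h2 : w x t = u₁ x t - μ * x * (h - x) := rfl
  rw [h2] at h1
  linarith [h1]
end

section
/- With K(x,t) = Σ_{k=1}^∞ (2((-1)^k-1)/(Π₁kπ)) e^{-ν(πk/h)²t} sin(πkx/h) and P₁ : [0,∞) → ℝ measurable with |P₁(ξ)| ≤ p̄, the function U₁(x₃) = ∫₀^∞ K(x₃,ξ)P₁(ξ)dξ satisfies h^{1/2}‖U₁‖_{L²([0,h])}/ν ≤ p̄h³/(Π₁ν²π²). -/
/-!
Expanding the kernel termwise, `U₁ x = ∑ c_k sin (π k x / h)`, where `c_k` is the `k`-th kernel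
coefficient times the Laplace transform of `P₁` at the rate `ν (π k / h)²`; hence `c_k = 0` for
even `k` and `|c_k| ≤ 4 p̄ h² / (Π₁ ν π³ k³)` for odd `k`. The Cauchy–Schwarz inequality
`(∑ c_k s_k)² ≤ (∑ |c_k|) (∑ |c_k| s_k²)` together with `∫₀ʰ sin² (π k x / h) dx = h / 2` gives
`‖U₁‖² ≤ (h / 2) (∑ |c_k|)²`. Finally `∑_{k odd} k⁻³ ≤ 115 / 108`, and the constant fits because
`(4 · 115 / 108)² ≤ 2 π²`.
-/

open MeasureTheory Real Set Filter Topology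

theorem integral_sin_sq_pi_mul_div (h : ℝ) {n : ℕ} (hn : n ≠ 0) :
    ∫ x in (0:ℝ)..h, sin (π * n * x / h) ^ 2 = h / 2 := by
  rcases eq_or_ne h 0 with rfl | hh
  · simp
  have hc : π * n / h ≠ 0 := by positivity
  have hsin : sin (π * n / h * h) = 0 := by
    rw [div_mul_cancel₀ _ hh, mul_comm]; exact sin_nat_mul_pi n
  simp_rw [mul_div_right_comm (π * n) _ h]
  rw [intervalIntegral.integral_comp_mul_left (fun x => sin x ^ 2) hc, integral_sin_sq, hsin]
  simp only [mul_zero, sin_zero, cos_zero, zero_mul, sub_self, zero_add, sub_zero, smul_eq_mul]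
  field_simp

theorem tsum_sq_le_tsum_mul_tsum {ι : Type*} {r f g : ι → ℝ} (hr : Summable r) (hf : Summable f)
    (hg : Summable g) (hf₀ : ∀ i, 0 ≤ f i) (hg₀ : ∀ i, 0 ≤ g i) (hrfg : ∀ i, r i ^ 2 ≤ f i * g i) :
    (∑' i, r i) ^ 2 ≤ (∑' i, f i) * ∑' i, g i :=
  le_of_tendsto_of_tendsto' (hr.hasSum.pow 2) (Tendsto.mul hf.hasSum hg.hasSum) fun s =>
    Finset.sum_sq_le_sum_mul_sum_of_sq_le_mul s (fun i _ => hf₀ i) (fun i _ => hg₀ i)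
      fun i _ => hrfg i

theorem integral_sq_tsum_mul_le {ι : Type*} [Countable ι] {c : ι → ℝ} {s : ι → ℝ → ℝ} {a b : ℝ}
    (hab : a ≤ b) (hc : Summable fun i => |c i|) (hs : ∀ i, Continuous (s i))
    (hs₁ : ∀ i x, |s i x| ≤ 1) :
    ∫ x in a..b, (∑' i, c i * s i x) ^ 2 ≤
      (∑' i, |c i|) * ∑' i, |c i| * ∫ x in a..b, s i x ^ 2 := by
  have hcs : ∀ i x, ‖c i * s i x‖ ≤ |c i| := fun i x => by
    rw [norm_mul, norm_eq_abs, norm_eq_abs]; exact mul_le_of_le_one_right (abs_nonneg _) (hs₁ i x)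
  have hcs2 : ∀ i x, ‖|c i| * s i x ^ 2‖ ≤ |c i| := fun i x => by
    rw [norm_mul, norm_pow, norm_eq_abs, norm_eq_abs, abs_abs]
    exact mul_le_of_le_one_right (abs_nonneg _) (pow_le_one₀ (abs_nonneg _) (hs₁ i x))
  have hcont : Continuous fun x => ∑' i, c i * s i x :=
    continuous_tsum (fun i => continuous_const.mul (hs i)) hc hcs
  have hcont2 : Continuous fun x => ∑' i, |c i| * s i x ^ 2 :=
    continuous_tsum (fun i => continuous_const.mul ((hs i).pow 2)) hc hcs2
  have hpt : ∀ x, (∑' i, c i * s i x) ^ 2 ≤ (∑' i, |c i|) * ∑' i, |c i| * s i x ^ 2 := fun x =>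
    tsum_sq_le_tsum_mul_tsum (hc.of_norm_bounded (hcs · x)) hc (hc.of_norm_bounded (hcs2 · x))
      (fun i => abs_nonneg _) (fun i => by positivity)
      fun i => le_of_eq (by rw [mul_pow, ← sq_abs (c i)]; ring)
  have hsum : HasSum (fun i => ∫ x in a..b, |c i| * s i x ^ 2)
      (∫ x in a..b, ∑' i, |c i| * s i x ^ 2) :=
    intervalIntegral.hasSum_integral_of_dominated_convergence (fun i _ => |c i|)
      (fun i => (continuous_const.mul ((hs i).pow 2)).aestronglyMeasurable)
      (fun i => ae_of_all _ fun x _ => hcs2 i x) (ae_of_all _ fun _ _ => hc)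
      intervalIntegrable_const
      (ae_of_all _ fun x _ => (hc.of_norm_bounded (hcs2 · x)).hasSum)
  calc ∫ x in a..b, (∑' i, c i * s i x) ^ 2
      ≤ ∫ x in a..b, (∑' i, |c i|) * ∑' i, |c i| * s i x ^ 2 :=
        intervalIntegral.integral_mono_on hab ((hcont.pow 2).intervalIntegrable _ _)
          ((continuous_const.mul hcont2).intervalIntegrable _ _) fun x _ => hpt x
    _ = (∑' i, |c i|) * ∑' i, |c i| * ∫ x in a..b, s i x ^ 2 := by
        rw [intervalIntegral.integral_const_mul, ← hsum.tsum_eq]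
        simp_rw [intervalIntegral.integral_const_mul]

theorem integral_sq_tsum_mul_sin_le {c : ℕ+ → ℝ} {h : ℝ} (hh : 0 ≤ h)
    (hc : Summable fun k => |c k|) :
    ∫ x in (0:ℝ)..h, (∑' k, c k * sin (π * k * x / h)) ^ 2 ≤ (∑' k, |c k|) ^ 2 * (h / 2) := by
  have := integral_sq_tsum_mul_le (s := fun (k : ℕ+) x => sin (π * k * x / h)) hh hc
    (fun k => by fun_prop) fun k x => abs_sin_le_one _
  simp_rw [integral_sin_sq_pi_mul_div h (PNat.ne_zero _), tsum_mul_right] at this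
  linarith

section Laplace

variable {P : ℝ → ℝ} {M : ℝ}

theorem integrableOn_exp_neg_mul_mul_Ioi {r : ℝ} (hr : 0 < r)
    (hP : AEStronglyMeasurable P (volume.restrict (Ioi 0))) (hPM : ∀ ξ, |P ξ| ≤ M) :
    IntegrableOn (fun ξ => exp (-r * ξ) * P ξ) (Ioi 0) :=
  (exp_neg_integrableOn_Ioi 0 hr).mul_bdd hP (ae_of_all _ hPM)

theorem integral_norm_exp_neg_mul_mul_Ioi_le {r : ℝ} (hr : 0 < r)
    (hP : AEStronglyMeasurable P (volume.restrict (Ioi 0))) (hPM : ∀ ξ, |P ξ| ≤ M) :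
    ∫ ξ in Ioi 0, ‖exp (-r * ξ) * P ξ‖ ≤ M / r := by
  calc ∫ ξ in Ioi 0, ‖exp (-r * ξ) * P ξ‖
      ≤ ∫ ξ in Ioi 0, M * exp (-r * ξ) := by
        refine integral_mono (integrableOn_exp_neg_mul_mul_Ioi hr hP hPM).norm
          ((exp_neg_integrableOn_Ioi 0 hr).const_mul M) fun ξ => ?_
        rw [norm_mul, norm_of_nonneg (exp_pos _).le, mul_comm]
        exact mul_le_mul_of_nonneg_right (hPM ξ) (exp_pos _).le
    _ = M / r := by
        rw [integral_const_mul, integral_exp_mul_Ioi (neg_lt_zero.2 hr), mul_zero, exp_zero,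
          div_neg, neg_div, neg_neg, mul_one_div]

theorem abs_integral_exp_neg_mul_mul_Ioi_le {r : ℝ} (hr : 0 < r)
    (hP : AEStronglyMeasurable P (volume.restrict (Ioi 0))) (hPM : ∀ ξ, |P ξ| ≤ M) :
    |∫ ξ in Ioi 0, exp (-r * ξ) * P ξ| ≤ M / r :=
  (norm_integral_le_integral_norm _).trans (integral_norm_exp_neg_mul_mul_Ioi_le hr hP hPM)

theorem integral_tsum_exp_neg_mul_mul_Ioi {ι : Type*} [Countable ι] {a r : ι → ℝ}
    (hr : ∀ i, 0 < r i) (hP : AEStronglyMeasurable P (volume.restrict (Ioi 0)))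
    (hPM : ∀ ξ, |P ξ| ≤ M) (ha : Summable fun i => |a i| / r i) :
    ∫ ξ in Ioi 0, (∑' i, a i * exp (-r i * ξ)) * P ξ =
      ∑' i, a i * ∫ ξ in Ioi 0, exp (-r i * ξ) * P ξ := by
  simp_rw [← tsum_mul_right, mul_assoc, ← integral_const_mul]
  refine (integral_tsum_of_summable_integral_norm
    (fun i => (integrableOn_exp_neg_mul_mul_Ioi (hr i) hP hPM).const_mul (a i)) ?_).symm
  refine (ha.mul_left M).of_nonneg_of_le (fun i => integral_nonneg fun _ => norm_nonneg _)
    fun i => ?_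
  simp_rw [norm_mul (a i), integral_const_mul, norm_eq_abs (a i)]
  calc |a i| * ∫ ξ in Ioi 0, ‖exp (-r i * ξ) * P ξ‖ ≤ |a i| * (M / r i) :=
        mul_le_mul_of_nonneg_left (integral_norm_exp_neg_mul_mul_Ioi_le (hr i) hP hPM)
          (abs_nonneg _)
    _ = M * (|a i| / r i) := by ring

end Laplace

/- The second summand dominates the tail by telescoping:
`1 / y ^ 3 ≤ (1 / (y - 2) ^ 2 - 1 / y ^ 2) / 4` for `y ≥ 3`. -/
theorem sum_range_one_div_odd_cube_add_le (n : ℕ) :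
    ∑ m ∈ Finset.range (n + 2), 1 / (2 * (m : ℝ) + 1) ^ 3 + 1 / (4 * (2 * (n : ℝ) + 3) ^ 2) ≤
      115 / 108 := by
  induction n with
  | zero => norm_num [Finset.sum_range_succ]
  | succ n ih =>
    have step : 1 / (2 * (n : ℝ) + 5) ^ 3 + 1 / (4 * (2 * n + 5) ^ 2) ≤
        1 / (4 * (2 * n + 3) ^ 2) := by
      rw [div_add_div _ _ (by positivity) (by positivity), div_le_div_iff₀ (by positivity)
        (by positivity)]
      nlinarith [mul_nonneg (pow_pos (by positivity : (0 : ℝ) < 2 * n + 5) 4).le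
        (by positivity : (0 : ℝ) ≤ 24 * n + 44)]
    rw [Finset.sum_range_succ]
    push_cast at ih ⊢
    rw [show 2 * ((n : ℝ) + 2) + 1 = 2 * n + 5 by ring,
      show 2 * ((n : ℝ) + 1) + 3 = 2 * n + 5 by ring]
    linarith

theorem sum_range_one_div_odd_cube_le (n : ℕ) :
    ∑ m ∈ Finset.range n, 1 / (2 * (m : ℝ) + 1) ^ 3 ≤ 115 / 108 := by
  have hsub : ∑ m ∈ Finset.range n, 1 / (2 * (m : ℝ) + 1) ^ 3 ≤
      ∑ m ∈ Finset.range (n + 2), 1 / (2 * (m : ℝ) + 1) ^ 3 :=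
    Finset.sum_le_sum_of_subset_of_nonneg (Finset.range_mono (by omega))
      fun _ _ _ => by positivity
  have := sum_range_one_div_odd_cube_add_le n
  have : (0 : ℝ) ≤ 1 / (4 * (2 * n + 3) ^ 2) := by positivity
  linarith

theorem hasSum_abs_neg_one_pow_sub_one_div_cube :
    HasSum (fun k : ℕ+ => |(-1 : ℝ) ^ (k : ℕ) - 1| / (k : ℝ) ^ 3)
      (2 * ∑' m : ℕ, 1 / (2 * (m : ℝ) + 1) ^ 3) := by
  have hinj : Function.Injective fun m : ℕ => (2 * m).succPNat := fun a b hab => by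
    simpa using congrArg PNat.val hab
  have hodd : ∀ k : ℕ+, k ∉ range (fun m : ℕ => (2 * m).succPNat) →
      |(-1 : ℝ) ^ (k : ℕ) - 1| / (k : ℝ) ^ 3 = 0 := by
    intro k hk
    rcases Nat.even_or_odd (k : ℕ) with he | ⟨m, hm⟩
    · simp [he.neg_one_pow]
    · exact (hk ⟨m, PNat.eq (by simp [hm])⟩).elim
  rw [← hinj.hasSum_iff hodd, ← tsum_mul_left]
  refine ((summable_of_sum_range_le (fun _ => by positivity)
    sum_range_one_div_odd_cube_le).mul_left 2).hasSum.congr_fun fun m => ?_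
  simp only [Function.comp_apply, Nat.succPNat_coe, Nat.cast_succ, Nat.cast_mul]
  rw [pow_succ, (even_two_mul m).neg_one_pow]
  norm_num [div_eq_mul_inv]

theorem tsum_abs_neg_one_pow_sub_one_div_cube_le :
    ∑' k : ℕ+, |(-1 : ℝ) ^ (k : ℕ) - 1| / (k : ℝ) ^ 3 ≤ 115 / 54 := by
  rw [hasSum_abs_neg_one_pow_sub_one_div_cube.tsum_eq]
  linarith [Real.tsum_le_of_sum_range_le (fun _ => by positivity) sum_range_one_div_odd_cube_le]

noncomputable def kernelCoeff (Pi₁ : ℝ) (k : ℕ+) : ℝ := 2 * ((-1 : ℝ) ^ (k : ℕ) - 1) / (Pi₁ * k * π)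

noncomputable def kernelRate (ν h : ℝ) (k : ℕ+) : ℝ := ν * (π * k / h) ^ 2

noncomputable def sineKernel (ν h Pi₁ x t : ℝ) : ℝ :=
  ∑' k, kernelCoeff Pi₁ k * exp (-kernelRate ν h k * t) * sin (π * k * x / h)

noncomputable def sineCoeff (ν h Pi₁ : ℝ) (P : ℝ → ℝ) (k : ℕ+) : ℝ :=
  kernelCoeff Pi₁ k * ∫ ξ in Ioi 0, exp (-kernelRate ν h k * ξ) * P ξ

section Kernel

variable {ν h Pi₁ M : ℝ} {P : ℝ → ℝ}

theorem kernelRate_pos (hν : 0 < ν) (hh : 0 < h) (k : ℕ+) : 0 < kernelRate ν h k := by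
  unfold kernelRate; positivity

theorem abs_kernelCoeff_div_kernelRate (hν : 0 < ν) (hh : 0 < h) (hPi₁ : 0 < Pi₁) (k : ℕ+) :
    |kernelCoeff Pi₁ k| / kernelRate ν h k =
      2 * h ^ 2 / (Pi₁ * ν * π ^ 3) * (|(-1 : ℝ) ^ (k : ℕ) - 1| / (k : ℝ) ^ 3) := by
  simp only [kernelCoeff, kernelRate, abs_div, abs_mul, abs_of_pos hPi₁, abs_of_pos pi_pos,
    Nat.abs_cast, abs_two]
  field_simp

theorem summable_abs_kernelCoeff_div_kernelRate (hν : 0 < ν) (hh : 0 < h) (hPi₁ : 0 < Pi₁) :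
    Summable fun k => |kernelCoeff Pi₁ k| / kernelRate ν h k := by
  simp_rw [abs_kernelCoeff_div_kernelRate hν hh hPi₁]
  exact hasSum_abs_neg_one_pow_sub_one_div_cube.summable.mul_left _

theorem tsum_abs_kernelCoeff_div_kernelRate_le (hν : 0 < ν) (hh : 0 < h) (hPi₁ : 0 < Pi₁) :
    ∑' k, |kernelCoeff Pi₁ k| / kernelRate ν h k ≤ 115 / 27 * h ^ 2 / (Pi₁ * ν * π ^ 3) := by
  simp_rw [abs_kernelCoeff_div_kernelRate hν hh hPi₁, tsum_mul_left]
  calc 2 * h ^ 2 / (Pi₁ * ν * π ^ 3) * ∑' k : ℕ+, |(-1 : ℝ) ^ (k : ℕ) - 1| / (k : ℝ) ^ 3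
      ≤ 2 * h ^ 2 / (Pi₁ * ν * π ^ 3) * (115 / 54) := by
        gcongr; exact tsum_abs_neg_one_pow_sub_one_div_cube_le
    _ = 115 / 27 * h ^ 2 / (Pi₁ * ν * π ^ 3) := by ring

theorem abs_sineCoeff_le (hν : 0 < ν) (hh : 0 < h)
    (hP : AEStronglyMeasurable P (volume.restrict (Ioi 0))) (hPM : ∀ ξ, |P ξ| ≤ M) (k : ℕ+) :
    |sineCoeff ν h Pi₁ P k| ≤ M * (|kernelCoeff Pi₁ k| / kernelRate ν h k) := by
  rw [sineCoeff, abs_mul, mul_div_left_comm]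
  exact mul_le_mul_of_nonneg_left
    (abs_integral_exp_neg_mul_mul_Ioi_le (kernelRate_pos hν hh k) hP hPM) (abs_nonneg _)

theorem summable_abs_sineCoeff (hν : 0 < ν) (hh : 0 < h) (hPi₁ : 0 < Pi₁)
    (hP : AEStronglyMeasurable P (volume.restrict (Ioi 0))) (hPM : ∀ ξ, |P ξ| ≤ M) : Summable fun k => |sineCoeff ν h Pi₁ P k| :=
  ((summable_abs_kernelCoeff_div_kernelRate hν hh hPi₁).mul_left M).of_nonneg_of_le
    (fun _ => abs_nonneg _) (abs_sineCoeff_le hν hh hP hPM)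

theorem tsum_abs_sineCoeff_le (hν : 0 < ν) (hh : 0 < h) (hPi₁ : 0 < Pi₁)
    (hP : AEStronglyMeasurable P (volume.restrict (Ioi 0))) (hPM : ∀ ξ, |P ξ| ≤ M) :
    ∑' k, |sineCoeff ν h Pi₁ P k| ≤ M * (115 / 27 * h ^ 2 / (Pi₁ * ν * π ^ 3)) := by
  have hM : 0 ≤ M := (abs_nonneg _).trans (hPM 0)
  have hsum := summable_abs_kernelCoeff_div_kernelRate hν hh hPi₁
  calc ∑' k, |sineCoeff ν h Pi₁ P k| ≤ ∑' k, M * (|kernelCoeff Pi₁ k| / kernelRate ν h k) :=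
        (summable_abs_sineCoeff hν hh hPi₁ hP hPM).tsum_le_tsum (abs_sineCoeff_le hν hh hP hPM)
          (hsum.mul_left M)
    _ ≤ M * (115 / 27 * h ^ 2 / (Pi₁ * ν * π ^ 3)) := by
        rw [tsum_mul_left]; gcongr; exact tsum_abs_kernelCoeff_div_kernelRate_le hν hh hPi₁

theorem integral_sineKernel_mul_eq_tsum (hν : 0 < ν) (hh : 0 < h) (hPi₁ : 0 < Pi₁)
    (hP : AEStronglyMeasurable P (volume.restrict (Ioi 0))) (hPM : ∀ ξ, |P ξ| ≤ M) (x : ℝ) :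
    ∫ ξ in Ioi 0, sineKernel ν h Pi₁ x ξ * P ξ =
      ∑' k, sineCoeff ν h Pi₁ P k * sin (π * k * x / h) := by
  have hr := kernelRate_pos hν hh
  simp_rw [sineKernel, mul_right_comm _ (exp _)]
  rw [integral_tsum_exp_neg_mul_mul_Ioi hr hP hPM]
  · simp_rw [sineCoeff]; congr 1; ext k; ring
  · refine (summable_abs_kernelCoeff_div_kernelRate hν hh hPi₁).of_nonneg_of_le
      (fun k => div_nonneg (abs_nonneg _) (hr k).le) fun k => ?_
    rw [abs_mul]
    exact div_le_div_of_nonneg_right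
      (mul_le_of_le_one_right (abs_nonneg _) (abs_sin_le_one _)) (hr k).le

end Kernel

theorem reynolds_number_bound_general
    (h ν Pi₁ pbar : ℝ) (hh : 0 < h) (hν : 0 < ν) (hPi₁ : 0 < Pi₁)
    (P₁ : ℝ → ℝ) (hP₁meas : Measurable P₁) (hP₁bdd : ∀ ξ : ℝ, |P₁ ξ| ≤ pbar)
    (K : ℝ → ℝ → ℝ)
    (hK : ∀ x t : ℝ, K x t =
      ∑' k : ℕ+, 2 * ((-1 : ℝ) ^ (k : ℕ) - 1) / (Pi₁ * (k : ℝ) * Real.pi) *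
        Real.exp (-ν * (Real.pi * (k : ℝ) / h) ^ 2 * t) *
        Real.sin (Real.pi * (k : ℝ) * x / h))
    (U₁ : ℝ → ℝ)
    (hU₁ : ∀ x : ℝ, U₁ x = ∫ ξ in Set.Ioi (0:ℝ), K x ξ * P₁ ξ) :
    Real.sqrt h * Real.sqrt (∫ x in (0:ℝ)..h, (U₁ x) ^ 2) / ν ≤
      pbar * h ^ 3 / (Pi₁ * ν ^ 2 * Real.pi ^ 2) := by
  have hP₁ : AEStronglyMeasurable P₁ (volume.restrict (Ioi 0)) := hP₁meas.aestronglyMeasurable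
  have hpbar : 0 ≤ pbar := (abs_nonneg _).trans (hP₁bdd 0)
  have hU : ∀ x, U₁ x = ∑' k, sineCoeff ν h Pi₁ P₁ k * sin (π * k * x / h) := fun x => by
    rw [hU₁, ← integral_sineKernel_mul_eq_tsum hν hh hPi₁ hP₁ hP₁bdd]
    congr with ξ
    rw [hK, sineKernel]
    simp only [kernelCoeff, kernelRate, neg_mul]
  have hI : ∫ x in (0:ℝ)..h, U₁ x ^ 2 ≤ (∑' k, |sineCoeff ν h Pi₁ P₁ k|) ^ 2 * (h / 2) := by
    simp_rw [hU]
    exact integral_sq_tsum_mul_sin_le hh.le (summable_abs_sineCoeff hν hh hPi₁ hP₁ hP₁bdd)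
  have hC := tsum_abs_sineCoeff_le hν hh hPi₁ hP₁ hP₁bdd
  have hπ : (115 / 27) ^ 2 / (2 * π ^ 2) ≤ 1 := by
    rw [div_le_one (by positivity)]; nlinarith [pi_gt_d2]
  rw [div_le_iff₀ hν, ← pow_le_pow_iff_left₀ (by positivity) (by positivity) two_ne_zero,
    mul_pow, sq_sqrt hh.le,
    sq_sqrt (intervalIntegral.integral_nonneg hh.le fun x _ => sq_nonneg (U₁ x))]
  calc h * ∫ x in (0:ℝ)..h, U₁ x ^ 2
      ≤ h * ((pbar * (115 / 27 * h ^ 2 / (Pi₁ * ν * π ^ 3))) ^ 2 * (h / 2)) := by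
        gcongr; exact hI.trans (by gcongr)
    _ = (115 / 27) ^ 2 / (2 * π ^ 2) * (pbar * h ^ 3 / (Pi₁ * ν ^ 2 * π ^ 2) * ν) ^ 2 := by
        field_simp
    _ ≤ (pbar * h ^ 3 / (Pi₁ * ν ^ 2 * π ^ 2) * ν) ^ 2 := mul_le_of_le_one_left (sq_nonneg _) hπ

/-- Bound on the Reynolds number by the pressure drop: with
`K(x,t) = Σ_{k≥1} (2((-1)^k-1)/(Π₁kπ)) e^{-ν(πk/h)²t} sin(πkx/h)` and `|P₁| ≤ p̄`,
the function `U₁(x₃) = ∫₀^∞ K(x₃,ξ)P₁(ξ)dξ` satisfies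
`h^{1/2}‖U₁‖_{L²([0,h])}/ν ≤ p̄h³/(Π₁ν²π²)`. -/
theorem reynolds_number_bound
    (h ν Pi₁ pbar : ℝ) (hh : 0 < h) (hν : 0 < ν) (hPi₁ : 0 < Pi₁) (hpbar : 0 < pbar)
    (P₁ : ℝ → ℝ) (hP₁meas : Measurable P₁) (hP₁bdd : ∀ ξ : ℝ, |P₁ ξ| ≤ pbar)
    (K : ℝ → ℝ → ℝ)
    (hK : ∀ x t : ℝ, K x t =
      ∑' k : ℕ+, 2 * ((-1 : ℝ) ^ (k : ℕ) - 1) / (Pi₁ * (k : ℝ) * Real.pi) *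
        Real.exp (-ν * (Real.pi * (k : ℝ) / h) ^ 2 * t) *
        Real.sin (Real.pi * (k : ℝ) * x / h))
    (U₁ : ℝ → ℝ)
    (hU₁ : ∀ x : ℝ, U₁ x = ∫ ξ in Set.Ioi (0:ℝ), K x ξ * P₁ ξ) :
    Real.sqrt h * Real.sqrt (∫ x in (0:ℝ)..h, (U₁ x) ^ 2) / ν ≤
      pbar * h ^ 3 / (Pi₁ * ν ^ 2 * Real.pi ^ 2) :=
  reynolds_number_bound_general h ν Pi₁ pbar hh hν hPi₁ P₁ hP₁meas hP₁bdd K hK U₁ hU₁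
end

section
/- Fix h, h₁ > 0 with h₁ sufficiently small relative to h, and set ε_n = (h₁/h)Σ_{l=1}^n 1/l². For each odd positive integer k, there is exactly one positive integer n with h/k ∈ ((h - ε_n h)/n, (h - ε_{n-1} h)/(n-1)], namely n = k; consequently, among n restricted to odd integers, the indicator s(n,k) = χ_{((h-ε_n h)/n, (h-ε_{n-1}h)/(n-1)]}(h/k)·χ_{odd}(n) is nonzero only for n = k. -/
/-!
Since `0 ≤ k ε_m < 1/2` for every `m` (the partial sums of `∑ 1/l²` are below `π²/6`), the left
inequality forces `n > k - 1/2` and the right one `n ≤ k + 1`. The case `n = k + 1` is excluded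
because it needs `k ε_k ≤ 0`, while `ε_k > 0`.
-/

open Real

lemma sum_Icc_one_div_sq_le_pi_sq_div_six (n : ℕ) :
    ∑ l ∈ Finset.Icc 1 n, (1 : ℝ) / (l : ℝ) ^ 2 ≤ π ^ 2 / 6 :=
  sum_le_hasSum _ (fun _ _ => by positivity) hasSum_zeta_two

lemma sum_Icc_one_div_sq_pos {n : ℕ} (hn : 1 ≤ n) :
    0 < ∑ l ∈ Finset.Icc 1 n, (1 : ℝ) / (l : ℝ) ^ 2 :=
  Finset.sum_pos' (fun _ _ => by positivity) ⟨1, Finset.mem_Icc.2 ⟨le_rfl, hn⟩, by norm_num⟩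

section Matching

variable {ε : ℕ → ℝ} {k n : ℕ}

lemma le_of_mul_one_sub_lt (hsmall : (k : ℝ) * ε n < 1 / 2) (h : (k : ℝ) * (1 - ε n) < n) :
    k ≤ n :=
  Nat.lt_succ_iff.mp (by exact_mod_cast (by linarith : (k : ℝ) < n + 1))

lemma lt_of_le_mul_one_sub_add_one (hnonneg : ∀ m, 0 ≤ ε m) (hpos : 0 < (k : ℝ) * ε k)
    (h : (n : ℝ) ≤ k * (1 - ε (n - 1)) + 1) : n < k + 1 := by
  have hle : n ≤ k + 1 := by
    have := mul_nonneg k.cast_nonneg (hnonneg (n - 1))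
    exact_mod_cast (by linarith : (n : ℝ) ≤ k + 1)
  rcases hle.lt_or_eq with hlt | rfl
  · exact hlt
  · rw [Nat.add_sub_cancel] at h
    push_cast at h
    linarith

theorem mul_one_sub_lt_and_le_iff (hnonneg : ∀ m, 0 ≤ ε m)
    (hsmall : ∀ m, (k : ℝ) * ε m < 1 / 2) (hpos : 0 < (k : ℝ) * ε k) :
    ((k : ℝ) * (1 - ε n) < n ∧ (n : ℝ) ≤ k * (1 - ε (n - 1)) + 1) ↔ n = k := by
  constructor
  · rintro ⟨hlow, hup⟩
    have := le_of_mul_one_sub_lt (hsmall n) hlow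
    have := lt_of_le_mul_one_sub_add_one hnonneg hpos hup
    omega
  · rintro rfl
    exact ⟨by linarith, by linarith [hsmall (n - 1)]⟩

end Matching

theorem roughness_matching_general
    (h h₁ : ℝ) (hh : 0 < h) (hh₁ : 0 < h₁)
    (ε : ℕ → ℝ)
    (hε : ∀ n : ℕ, ε n = (h₁ / h) * ∑ l ∈ Finset.Icc 1 n, (1 : ℝ) / (l : ℝ) ^ 2)
    (k : ℕ) (hk1 : 1 ≤ k)
    (hsmall : (k : ℝ) * (h₁ / h) * (Real.pi ^ 2 / 6) < 1 / 2) :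
    ∀ n : ℕ, 1 ≤ n →
      (((k : ℝ) * (1 - ε n) < (n : ℝ) ∧ (n : ℝ) ≤ (k : ℝ) * (1 - ε (n - 1)) + 1) ↔ n = k) := by
  have hq : 0 < h₁ / h := div_pos hh₁ hh
  have hnonneg : ∀ m, 0 ≤ ε m := fun m =>
    hε m ▸ mul_nonneg hq.le (Finset.sum_nonneg fun _ _ => by positivity)
  have hbound : ∀ m, (k : ℝ) * ε m < 1 / 2 := fun m =>
    calc (k : ℝ) * ε m = k * (h₁ / h) * ∑ l ∈ Finset.Icc 1 m, (1 : ℝ) / (l : ℝ) ^ 2 := by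
          rw [hε, mul_assoc]
      _ ≤ k * (h₁ / h) * (π ^ 2 / 6) := by
          gcongr
          exact sum_Icc_one_div_sq_le_pi_sq_div_six m
      _ < 1 / 2 := hsmall
  have hpos : 0 < (k : ℝ) * ε k := by
    rw [hε]
    exact mul_pos (by exact_mod_cast hk1) (mul_pos hq (sum_Icc_one_div_sq_pos hk1))
  exact fun n _ => mul_one_sub_lt_and_le_iff hnonneg hbound hpos

/-- The "matching" argument: with `ε_n = (h₁/h)Σ_{l=1}^n 1/l²` and `h₁` sufficiently
small relative to `h` (for the given odd `k`), the condition
`n ∈ (k(1-ε_n), k(1-ε_{n-1})+1]` (equivalent to `h/k ∈ ((h-ε_n h)/n, (h-ε_{n-1}h)/(n-1)]`)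
holds for exactly one positive integer `n`, namely `n = k`; in particular, among odd `n`
the indicator `s(n,k)` is nonzero only for `n = k`. -/
theorem roughness_matching
    (h h₁ : ℝ) (hh : 0 < h) (hh₁ : 0 < h₁)
    (ε : ℕ → ℝ)
    (hε : ∀ n : ℕ, ε n = (h₁ / h) * ∑ l ∈ Finset.Icc 1 n, (1 : ℝ) / (l : ℝ) ^ 2)
    (k : ℕ) (hk : Odd k) (hk1 : 1 ≤ k)
    (hsmall : (k : ℝ) * (h₁ / h) * (Real.pi ^ 2 / 6) < 1 / 2) :
    ∀ n : ℕ, 1 ≤ n →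
      (((k : ℝ) * (1 - ε n) < (n : ℝ) ∧ (n : ℝ) ≤ (k : ℝ) * (1 - ε (n - 1)) + 1) ↔ n = k) :=
  roughness_matching_general h h₁ hh hh₁ ε hε k hk1 hsmall
end
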